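/- Let (X,Y) be jointly normal with E[X] = μ_x, E[Y] = μ_y, Var(X) = σ_x² > 0, Var(Y) = σ_y² > 0 and correlation ρ with |ρ| < 1. Then for all α, β ∈ (0,1), CoVaR_{α,β} = μ_y + σ_y [ ρ Φ^{−1}(α) + √(1 − ρ²) Φ^{−1}(β) ], where Φ^{−1} is the inverse of the standard normal cumulative distribution function. -/

import Mathlib

open MeasureTheory ProbabilityTheory Set

noncomputable section

/-- The standard normal cumulative distribution function `Φ`. -/
def stdNormalCDF (t : ℝ) : ℝ := (gaussianReal 0 1 (Iic t)).toReal

/-- The bivariate normal density with means `μx, μy`, standard deviations `σx, σy`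
and correlation `ρ`. -/
def binormPDF (μx μy σx σy ρ : ℝ) (x y : ℝ) : ℝ :=
  1 / (2 * Real.pi * σx * σy * Real.sqrt (1 - ρ ^ 2)) *
    Real.exp (-(((x - μx) / σx) ^ 2 - 2 * ρ * ((x - μx) / σx) * ((y - μy) / σy)
      + ((y - μy) / σy) ^ 2) / (2 * (1 - ρ ^ 2)))

/-! The density factors as the `N(μx, σx²)` density of `x` times the
`N(μy + σy ρ (x - μx) / σx, σy² (1 - ρ²))` density of `y`. Integrating out `y` shows that
`X ∼ N(μx, σx²)`, so `VaR_α(X) = μx + σx Φ⁻¹(α)`; dividing by the marginal shows that the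
conditional law of `Y` given `X = x` is the second factor, whose `β`-quantile is its mean plus
`σy √(1 - ρ²) Φ⁻¹(β)`. -/

lemma one_sub_sq_pos_of_abs_lt_one {ρ : ℝ} (hρ : |ρ| < 1) : 0 < 1 - ρ ^ 2 := by
  nlinarith [sq_abs ρ, abs_nonneg ρ]

lemma stdNormalCDF_strictMono : StrictMono stdNormalCDF := by
  intro x y hxy
  have hIoc : gaussianReal 0 1 (Ioc x y) ≠ 0 := fun h => by
    have := gaussianReal_absolutelyContinuous' 0 one_ne_zero h
    simp only [Real.volume_Ioc, ENNReal.ofReal_eq_zero] at this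
    linarith
  have hlt : gaussianReal 0 1 (Iic x) < gaussianReal 0 1 (Iic y) := by
    rw [← Iic_union_Ioc_eq_Iic hxy.le, measure_union (Iic_disjoint_Ioc le_rfl) measurableSet_Ioc]
    exact ENNReal.lt_add_right (measure_ne_top _ _) hIoc
  exact ENNReal.toReal_strict_mono (measure_ne_top _ _) hlt

lemma NNReal.mk_sq_ne_zero {s : ℝ} (hs : 0 < s) : NNReal.mk (s ^ 2) (sq_nonneg s) ≠ 0 := by
  rw [← NNReal.coe_ne_zero]; exact (pow_pos hs 2).ne'

lemma gaussianReal_Iic_toReal (m : ℝ) {s : ℝ} (hs : 0 < s) (c : ℝ) :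
    (gaussianReal m (.mk (s ^ 2) (sq_nonneg s)) (Iic c)).toReal = stdNormalCDF ((c - m) / s) := by
  have hstd : (gaussianReal m (.mk (s ^ 2) (sq_nonneg s))).map (fun x => (x - m) / s)
      = gaussianReal 0 1 := by
    have hv := div_self (NNReal.mk_sq_ne_zero hs)
    rw [show (fun x => (x - m) / s) = (· / s) ∘ (· - m) from rfl,
      ← Measure.map_map (by fun_prop) (by fun_prop), gaussianReal_map_sub_const,
      gaussianReal_map_div_const, sub_self, zero_div, hv]
  have hpre : (fun x => (x - m) / s) ⁻¹' Iic ((c - m) / s) = Iic c := by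
    ext x
    simp [div_le_div_iff_of_pos_right hs]
  rw [stdNormalCDF, ← hstd, Measure.map_apply (by fun_prop) measurableSet_Iic, hpre]

lemma setIntegral_Iio_gaussianPDFReal (m : ℝ) {s : ℝ} (hs : 0 < s) (c : ℝ) :
    ∫ x in Iio c, gaussianPDFReal m (.mk (s ^ 2) (sq_nonneg s)) x = stdNormalCDF ((c - m) / s) := by
  rw [← gaussianReal_Iic_toReal m hs, gaussianReal_apply_eq_integral m (NNReal.mk_sq_ne_zero hs),
    ENNReal.toReal_ofReal (integral_nonneg fun x => gaussianPDFReal_nonneg _ _ _),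
    integral_Iic_eq_integral_Iio]

lemma gaussianPDFReal_sq {s : ℝ} (hs : 0 < s) (m x : ℝ) :
    gaussianPDFReal m (.mk (s ^ 2) (sq_nonneg s)) x
      = (Real.sqrt (2 * Real.pi) * s)⁻¹ * Real.exp (-(x - m) ^ 2 / (2 * s ^ 2)) := by
  rw [gaussianPDFReal, NNReal.coe_mk, Real.sqrt_mul (by positivity), Real.sqrt_sq hs.le]

section Binormal

variable {μx μy σx σy ρ : ℝ}

lemma mul_sqrt_one_sub_sq_pos (hσy : 0 < σy) (hρ : |ρ| < 1) : 0 < σy * Real.sqrt (1 - ρ ^ 2) :=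
  mul_pos hσy (Real.sqrt_pos.mpr (one_sub_sq_pos_of_abs_lt_one hρ))

theorem binormPDF_eq_mul_gaussianPDFReal (hσx : 0 < σx) (hσy : 0 < σy) (hρ : |ρ| < 1)
    (x y : ℝ) :
    binormPDF μx μy σx σy ρ x y
      = gaussianPDFReal μx (.mk (σx ^ 2) (sq_nonneg σx)) x
        * gaussianPDFReal (μy + σy * ρ * ((x - μx) / σx))
            (.mk ((σy * Real.sqrt (1 - ρ ^ 2)) ^ 2) (sq_nonneg _)) y := by
  have h1ρ := one_sub_sq_pos_of_abs_lt_one hρ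
  have h2π : Real.sqrt (2 * Real.pi) ^ 2 = 2 * Real.pi := Real.sq_sqrt (by positivity)
  rw [gaussianPDFReal_sq hσx, gaussianPDFReal_sq (mul_sqrt_one_sub_sq_pos hσy hρ), mul_mul_mul_comm,
    ← mul_inv, ← Real.exp_add, binormPDF, one_div]
  congr 2
  · linear_combination (-(σx * σy * Real.sqrt (1 - ρ ^ 2))) * h2π
  · rw [mul_pow, Real.sq_sqrt h1ρ.le]
    field_simp
    ring

theorem integral_binormPDF_right (hσx : 0 < σx) (hσy : 0 < σy) (hρ : |ρ| < 1) (x : ℝ) :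
    ∫ y, binormPDF μx μy σx σy ρ x y = gaussianPDFReal μx (.mk (σx ^ 2) (sq_nonneg σx)) x := by
  have hv := NNReal.mk_sq_ne_zero (mul_sqrt_one_sub_sq_pos hσy hρ)
  simp_rw [binormPDF_eq_mul_gaussianPDFReal hσx hσy hρ x]
  rw [integral_const_mul, integral_gaussianPDFReal_eq_one _ hv, mul_one]

theorem binormPDF_div_integral (hσx : 0 < σx) (hσy : 0 < σy) (hρ : |ρ| < 1) (x y : ℝ) :
    binormPDF μx μy σx σy ρ x y / ∫ y', binormPDF μx μy σx σy ρ x y'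
      = gaussianPDFReal (μy + σy * ρ * ((x - μx) / σx))
          (.mk ((σy * Real.sqrt (1 - ρ ^ 2)) ^ 2) (sq_nonneg _)) y := by
  rw [integral_binormPDF_right hσx hσy hρ, binormPDF_eq_mul_gaussianPDFReal hσx hσy hρ,
    mul_div_cancel_left₀ _ (gaussianPDFReal_pos _ _ _ (NNReal.mk_sq_ne_zero hσx)).ne']

theorem lintegral_binormPDF_right (hσx : 0 < σx) (hσy : 0 < σy) (hρ : |ρ| < 1) (x : ℝ) :
    ∫⁻ y, ENNReal.ofReal (binormPDF μx μy σx σy ρ x y)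
      = gaussianPDF μx (.mk (σx ^ 2) (sq_nonneg σx)) x := by
  have hv := NNReal.mk_sq_ne_zero (mul_sqrt_one_sub_sq_pos hσy hρ)
  simp_rw [binormPDF_eq_mul_gaussianPDFReal hσx hσy hρ x,
    ENNReal.ofReal_mul (gaussianPDFReal_nonneg _ _ _)]
  rw [lintegral_const_mul _ (measurable_gaussianPDFReal _ _).ennreal_ofReal,
    lintegral_gaussianPDFReal_eq_one _ hv, mul_one, gaussianPDF]

theorem map_fst_withDensity_binormPDF (hσx : 0 < σx) (hσy : 0 < σy) (hρ : |ρ| < 1) :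
    ((volume : Measure (ℝ × ℝ)).withDensity
        (fun p => ENNReal.ofReal (binormPDF μx μy σx σy ρ p.1 p.2))).map Prod.fst
      = gaussianReal μx (.mk (σx ^ 2) (sq_nonneg σx)) := by
  have hmeas : Measurable fun p : ℝ × ℝ => ENNReal.ofReal (binormPDF μx μy σx σy ρ p.1 p.2) := by
    unfold binormPDF; fun_prop
  ext s hs
  rw [Measure.map_apply measurable_fst hs, ← prod_univ, withDensity_apply _ (hs.prod .univ),
    Measure.volume_eq_prod, ← Measure.prod_restrict, Measure.restrict_univ,
    lintegral_prod _ hmeas.aemeasurable, gaussianReal_apply _ (NNReal.mk_sq_ne_zero hσx)]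
  simp only [lintegral_binormPDF_right hσx hσy hρ]

end Binormal

theorem covar_bivariate_normal_general
    {Ω : Type*} [MeasurableSpace Ω] (P : Measure Ω)
    (X Y : Ω → ℝ) (hX : Measurable X) (hY : Measurable Y)
    (μx μy σx σy ρ : ℝ) (hσx : 0 < σx) (hσy : 0 < σy) (hρ : |ρ| < 1)
    (hjoint : Measure.map (fun ω => (X ω, Y ω)) P
      = (volume : Measure (ℝ × ℝ)).withDensity
          (fun p => ENNReal.ofReal (binormPDF μx μy σx σy ρ p.1 p.2)))
    (α β : ℝ)
    (a b : ℝ) (ha : stdNormalCDF a = α) (hb : stdNormalCDF b = β)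
    -- `vα = VaR_α(X)`
    (vα : ℝ) (hvα : P {ω | X ω ≤ vα} = ENNReal.ofReal α)
    -- `c = CoVaR_{α,β}`: the `β`-quantile of the conditional density of `Y` given
    -- `X = vα`
    (c : ℝ)
    (hc : (∫ v in Iio c, binormPDF μx μy σx σy ρ vα v
        / (∫ y, binormPDF μx μy σx σy ρ vα y)) = β) :
    c = μy + σy * (ρ * a + Real.sqrt (1 - ρ ^ 2) * b) := by
  have hsy := mul_sqrt_one_sub_sq_pos hσy hρ
  have hlawX : P.map X = gaussianReal μx (.mk (σx ^ 2) (sq_nonneg σx)) := by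
    rw [← map_fst_withDensity_binormPDF hσx hσy hρ, ← hjoint,
      Measure.map_map measurable_fst (hX.prodMk hY)]
    rfl
  have hVaR : (vα - μx) / σx = a := by
    refine stdNormalCDF_strictMono.injective ?_
    rw [← gaussianReal_Iic_toReal μx hσx, ← hlawX, Measure.map_apply hX measurableSet_Iic, show X ⁻¹' Iic vα = {ω | X ω ≤ vα} from rfl, hvα,
      ENNReal.toReal_ofReal (ha ▸ ENNReal.toReal_nonneg), ha]
  have hCoVaR : (c - (μy + σy * ρ * ((vα - μx) / σx))) / (σy * Real.sqrt (1 - ρ ^ 2)) = b := by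
    refine stdNormalCDF_strictMono.injective ?_
    simp_rw [binormPDF_div_integral hσx hσy hρ] at hc
    rw [← setIntegral_Iio_gaussianPDFReal _ hsy, hc, hb]
  rw [hVaR, div_eq_iff hsy.ne'] at hCoVaR
  linear_combination hCoVaR

/-- For `(X, Y)` jointly normal with means `μx, μy`, variances
`σx², σy² > 0` and correlation `ρ`, `|ρ| < 1`, for all `α, β ∈ (0,1)`:
`CoVaR_{α,β} = μy + σy (ρ Φ⁻¹(α) + √(1−ρ²) Φ⁻¹(β))`.  Here `VaR_α(X) = vα`
satisfies `Pr{X ≤ vα} = α`, and `CoVaR_{α,β} = c` is the `β`-quantile of the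
conditional distribution of `Y` given `X = vα` (w.r.t. the joint density), and
`Φ⁻¹(α) = a`, `Φ⁻¹(β) = b` are characterized by `Φ(a) = α`, `Φ(b) = β`. -/
theorem covar_bivariate_normal
    {Ω : Type*} [MeasurableSpace Ω] (P : Measure Ω) [IsProbabilityMeasure P]
    (X Y : Ω → ℝ) (hX : Measurable X) (hY : Measurable Y)
    (μx μy σx σy ρ : ℝ) (hσx : 0 < σx) (hσy : 0 < σy) (hρ : |ρ| < 1)
    (hjoint : Measure.map (fun ω => (X ω, Y ω)) P
      = (volume : Measure (ℝ × ℝ)).withDensity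
          (fun p => ENNReal.ofReal (binormPDF μx μy σx σy ρ p.1 p.2)))
    (α β : ℝ) (hα : α ∈ Ioo (0:ℝ) 1) (hβ : β ∈ Ioo (0:ℝ) 1)
    (a b : ℝ) (ha : stdNormalCDF a = α) (hb : stdNormalCDF b = β)
    -- `vα = VaR_α(X)`
    (vα : ℝ) (hvα : P {ω | X ω ≤ vα} = ENNReal.ofReal α)
    -- `c = CoVaR_{α,β}`: the `β`-quantile of the conditional density of `Y` given
    -- `X = vα`
    (c : ℝ)
    (hc : (∫ v in Iio c, binormPDF μx μy σx σy ρ vα v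
        / (∫ y, binormPDF μx μy σx σy ρ vα y)) = β) :
    c = μy + σy * (ρ * a + Real.sqrt (1 - ρ ^ 2) * b) :=
  covar_bivariate_normal_general P X Y hX hY μx μy σx σy ρ hσx hσy hρ hjoint α β a b ha hb vα hvα c
    hc
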